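/- Intersection does not distribute over arrow via subtyping: there exist types A1, A2, B1, B2 such that (A1→B1) ∧ (A2→B2) ≤ (A1∧A2) → (B1∧B2) is not derivable. -/
import Mathlib


inductive Ty : Type
| arr : Ty → Ty → Ty
| inter : Ty → Ty → Ty
| union : Ty → Ty → Ty
| bot : Ty
deriving DecidableEq

inductive Subty : Ty → Ty → Prop
| arr {A1 A2 B1 B2} : Subty B1 A1 → Subty A2 B2 → Subty (Ty.arr A1 A2) (Ty.arr B1 B2)
| interL1 {A1 A2 B} : Subty A1 B → Subty (Ty.inter A1 A2) B
| interL2 {A1 A2 B} : Subty A2 B → Subty (Ty.inter A1 A2) B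
| interR {A B1 B2} : Subty A B1 → Subty A B2 → Subty A (Ty.inter B1 B2)
| botL {A} : Subty Ty.bot A
| unionL {A1 A2 B} : Subty A1 B → Subty A2 B → Subty (Ty.union A1 A2) B
| unionR1 {A B1 B2} : Subty A B1 → Subty A (Ty.union B1 B2)
| unionR2 {A B1 B2} : Subty A B2 → Subty A (Ty.union B1 B2)

lemma arr_not_bot {A B : Ty} (h : Subty (Ty.arr A B) Ty.bot) : False := by
  cases h

theorem inter_arrow_no_distrib :
    ∃ A1 A2 B1 B2 : Ty,
      ¬ Subty (Ty.inter (Ty.arr A1 B1) (Ty.arr A2 B2))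
            (Ty.arr (Ty.inter A1 A2) (Ty.inter B1 B2)) := by
  refine ⟨Ty.bot, Ty.bot, Ty.arr Ty.bot Ty.bot,
    Ty.arr (Ty.arr Ty.bot Ty.bot) (Ty.arr Ty.bot Ty.bot), ?_⟩
  intro h
  cases h with
  | interL1 h =>
    cases h with
    | arr h1 h2 =>
      cases h2 with
      | interR ha hb =>
        cases hb with
        | arr hc hd => exact arr_not_bot hc
  | interL2 h =>
    cases h with
    | arr h1 h2 =>
      cases h2 with
      | interR ha hb =>
        cases ha with
        | arr hc hd => exact arr_not_bot hd
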